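/- (No Hamiltonian exceptional point can coincide with the Liouvillian spectral structure.) Let L : M_n(ℂ) → M_n(ℂ) be a Liouvillian and let φ ∈ ℂⁿ be a nonzero vector such that the rank-one matrix ρ = φφᴴ is an eigenmatrix of L, L(ρ) = λρ. Then necessarily λ = 0, and there exists no σ ∈ M_n(ℂ) with (L − λ·id)(σ) = ρ; in particular, ρ cannot be the eigenmatrix of a nontrivial Jordan chain of L, so the Jordan (exceptional-point) structure of a non-Hermitian Hamiltonian built on the eigenvectors φ cannot be reproduced exactly by L. -/
import Mathlib

open Matrix Complex

lemma trace_lindblad {n : ℕ} (H : Matrix (Fin n) (Fin n) ℂ)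
    (F : Type) [Fintype F] (Γ : F → Matrix (Fin n) (Fin n) ℂ)
    (ρ : Matrix (Fin n) (Fin n) ℂ) :
    Matrix.trace ((-Complex.I) • (H * ρ - ρ * H) +
        ∑ μ : F, (Γ μ * ρ * (Γ μ)ᴴ -
          (2⁻¹ : ℂ) • ((Γ μ)ᴴ * Γ μ * ρ + ρ * ((Γ μ)ᴴ * Γ μ)))) = 0 := by
  have h1 : Matrix.trace (H * ρ) = Matrix.trace (ρ * H) := Matrix.trace_mul_comm _ _
  have h2 : ∀ μ : F, Matrix.trace (Γ μ * ρ * (Γ μ)ᴴ -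
      (2⁻¹ : ℂ) • ((Γ μ)ᴴ * Γ μ * ρ + ρ * ((Γ μ)ᴴ * Γ μ))) = 0 := by
    intro μ
    rw [Matrix.trace_sub, Matrix.trace_smul, Matrix.trace_add,
      Matrix.trace_mul_cycle (Γ μ) ρ (Γ μ)ᴴ, Matrix.trace_mul_comm ρ ((Γ μ)ᴴ * Γ μ),
      smul_eq_mul]
    ring
  rw [Matrix.trace_add, Matrix.trace_smul, Matrix.trace_sum,
    Finset.sum_eq_zero (fun μ _ => h2 μ), Matrix.trace_sub, h1]
  simp

lemma trace_vecMulVec_ne {n : ℕ} (φ : Fin n → ℂ) (hφ : φ ≠ 0) :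
    Matrix.trace (Matrix.vecMulVec φ (star φ)) ≠ 0 := by
  have : Matrix.trace (Matrix.vecMulVec φ (star φ))
      = ∑ i, (Complex.normSq (φ i) : ℂ) := by
    simp [Matrix.trace, Matrix.vecMulVec, Matrix.diag, mul_comm,
      Complex.normSq_eq_conj_mul_self]
  rw [this]
  rw [show (∑ i, (Complex.normSq (φ i) : ℂ)) = ((∑ i, Complex.normSq (φ i) : ℝ) : ℂ) by
    push_cast; ring]
  intro h
  have h' : (∑ i, Complex.normSq (φ i)) = 0 := by exact_mod_cast h
  apply hφ
  funext i
  have := (Finset.sum_eq_zero_iff_of_nonneg (fun i _ => Complex.normSq_nonneg (φ i))).mp h' i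
    (Finset.mem_univ i)
  exact Complex.normSq_eq_zero.mp this

theorem no_jordan_chain_on_rank_one_eigenmatrix (n : ℕ)
    (H : Matrix (Fin n) (Fin n) ℂ) (hH : H.IsHermitian)
    (F : Type) [Fintype F] (Γ : F → Matrix (Fin n) (Fin n) ℂ)
    (L : Module.End ℂ (Matrix (Fin n) (Fin n) ℂ))
    (hL : ∀ ρ : Matrix (Fin n) (Fin n) ℂ,
      L ρ = (-Complex.I) • (H * ρ - ρ * H) +
        ∑ μ : F, (Γ μ * ρ * (Γ μ)ᴴ -
          (2⁻¹ : ℂ) • ((Γ μ)ᴴ * Γ μ * ρ + ρ * ((Γ μ)ᴴ * Γ μ))))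
    (φ : Fin n → ℂ) (hφ : φ ≠ 0) (lam : ℂ)
    (heig : L (Matrix.vecMulVec φ (star φ)) = lam • Matrix.vecMulVec φ (star φ)) :
    lam = 0 ∧
      ∀ σ : Matrix (Fin n) (Fin n) ℂ,
        L σ - lam • σ ≠ Matrix.vecMulVec φ (star φ) := by
  have htr0 : ∀ ρ, Matrix.trace (L ρ) = 0 := fun ρ => by
    rw [hL ρ]; exact trace_lindblad H F Γ ρ
  have hne := trace_vecMulVec_ne φ hφ
  have hlam : lam = 0 := by
    have := htr0 (Matrix.vecMulVec φ (star φ))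
    rw [heig, Matrix.trace_smul] at this
    rcases mul_eq_zero.mp this with h | h
    · exact h
    · exact absurd h hne
  refine ⟨hlam, fun σ hσ => ?_⟩
  rw [hlam, zero_smul, sub_zero] at hσ
  exact hne (by rw [← hσ, htr0])
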